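/- Let $f : M \to \mathbb{R}$ be a smooth function on a real vector space identified with the tangent space at a critical point, let $H_f$ be the Hessian quadratic form at the critical point, and suppose $J$ is a complex structure on the tangent space $T_x M$ (real dimension $2n$). Suppose there is a $J$-invariant subspace $W$ of complex dimension $m$ such that $H_f(v) + H_f(Jv) < 0$ for every nonzero $v \in W$. Then the index of $H_f$ (the maximal dimension of a subspace on which $H_f$ is negative definite) is at least $m$. -/
import Mathlib


/-- Let `Q` be the Hessian quadratic form of a function at a critical point on a
real vector space `T` of dimension `2n`, with a complex structure `J`. If there is a `J`-invariant
subspace `W` of complex dimension `m` (real dimension `2m`) such that `Q v + Q (J v) < 0` for all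
nonzero `v ∈ W`, then the index of `Q` (maximal dimension of a negative definite subspace) is at
least `m`. -/
theorem index_ge_of_neg_on_complex_subspace
    {T : Type*} [AddCommGroup T] [Module ℝ T] [FiniteDimensional ℝ T]
    (n m : ℕ) (hT : Module.finrank ℝ T = 2 * n)
    (J : T →ₗ[ℝ] T) (hJ : ∀ v, J (J v) = -v)
    (Q : QuadraticForm ℝ T)
    (W : Submodule ℝ T) (hWJ : ∀ w ∈ W, J w ∈ W)
    (hWdim : Module.finrank ℝ W = 2 * m)
    (hneg : ∀ v ∈ W, v ≠ 0 → Q v + Q (J v) < 0) :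
    ∃ N : Submodule ℝ T, m ≤ Module.finrank ℝ N ∧ ∀ v ∈ N, v ≠ 0 → Q v < 0 := by
  classical
  set P' : ℕ → Prop := fun k =>
    ∃ N : Submodule ℝ T, N ≤ W ∧ Module.finrank ℝ N = k ∧ (∀ v ∈ N, v ≠ 0 → Q v < 0) with hP'
  have hP0 : P' 0 := ⟨⊥, bot_le, finrank_bot ℝ T, fun v hv hv0 => absurd hv (by simp [hv0])⟩
  have hbound : ∀ k', P' k' → k' ≤ 2 * m := by
    rintro k' ⟨N, hNW, hNr, -⟩
    rw [← hNr, ← hWdim]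
    exact Submodule.finrank_mono hNW
  set k := Nat.findGreatest P' (2 * m) with hk
  have hPk : P' k := Nat.findGreatest_spec (Nat.zero_le _) hP0
  obtain ⟨N, hNW, hNr, hNneg⟩ := hPk
  rcases le_or_gt m k with hmk | hkm
  · exact ⟨N, hNr ▸ hmk, hNneg⟩
  exfalso
  set B : T →ₗ[ℝ] T →ₗ[ℝ] ℝ := QuadraticMap.polarBilin Q with hB
  set φ : T →ₗ[ℝ] (N →ₗ[ℝ] ℝ) := (LinearMap.lcomp ℝ ℝ N.subtype).comp B with hφ
  set P : Submodule ℝ T := W ⊓ LinearMap.ker φ with hP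
  -- Q is nonnegative on P
  have hPpos : ∀ v ∈ P, 0 ≤ Q v := by
    intro v hv
    by_contra hQv
    push_neg at hQv
    obtain ⟨hvW, hvker⟩ := hv
    have hvortho : ∀ u ∈ N, QuadraticMap.polar Q v u = 0 := by
      intro u hu
      have := congrFun (congrArg DFunLike.coe (LinearMap.mem_ker.mp hvker)) ⟨u, hu⟩
      simpa [hφ, hB] using this
    have hv0 : v ≠ 0 := by rintro rfl; simp at hQv
    have hvN : v ∉ N := by
      intro hvN
      have h0 := hvortho v hvN
      have h2 : QuadraticMap.polar (⇑Q) v v = 2 * Q v := by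
        show Q (v + v) - Q v - Q v = 2 * Q v
        rw [show v + v = (2:ℝ) • v by module, QuadraticMap.map_smul, smul_eq_mul]
        ring
      rw [h2] at h0
      linarith
    have hinf : N ⊓ Submodule.span ℝ {v} = ⊥ := by
      rw [eq_bot_iff]
      rintro x ⟨hxN, hxs⟩
      obtain ⟨a, rfl⟩ := Submodule.mem_span_singleton.mp hxs
      rcases eq_or_ne a 0 with rfl | ha
      · simp
      · exact absurd (by simpa [smul_smul, inv_mul_cancel₀ ha] using N.smul_mem a⁻¹ hxN : v ∈ N) hvN
    have hsup : Module.finrank ℝ ↥(N ⊔ Submodule.span ℝ {v}) = k + 1 := by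
      have := Submodule.finrank_sup_add_finrank_inf_eq N (Submodule.span ℝ {v})
      rw [hinf, finrank_span_singleton hv0, hNr] at this
      simpa using this
    have hnegsup : ∀ w ∈ N ⊔ Submodule.span ℝ {v}, w ≠ 0 → Q w < 0 := by
      intro w hw hw0
      obtain ⟨u, hu, z, hz, rfl⟩ := Submodule.mem_sup.mp hw
      obtain ⟨a, rfl⟩ := Submodule.mem_span_singleton.mp hz
      have hexp : Q (u + a • v) = Q u + (a * a) * Q v + a * QuadraticMap.polar (⇑Q) v u := by
        have h1 : QuadraticMap.polar (⇑Q) u (a • v) = a * QuadraticMap.polar (⇑Q) v u := by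
          rw [QuadraticMap.polar_smul_right, QuadraticMap.polar_comm]
          simp
        have hadd : Q (u + a • v) = Q u + Q (a • v) + QuadraticMap.polar (⇑Q) u (a • v) := by
          show Q (u + a • v) = Q u + Q (a • v) + (Q (u + a • v) - Q u - Q (a • v))
          ring
        rw [hadd, h1, QuadraticMap.map_smul, smul_eq_mul]
      rw [hexp, hvortho u hu, mul_zero, add_zero]
      rcases eq_or_ne u 0 with rfl | hu0
      · have ha : a ≠ 0 := by rintro rfl; simp at hw0
        have : a * a * Q v < 0 := mul_neg_of_pos_of_neg (mul_self_pos.mpr ha) hQv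
        simpa using this
      · have h1 : Q u < 0 := hNneg u hu hu0
        have h2 : (a * a) * Q v ≤ 0 := mul_nonpos_of_nonneg_of_nonpos (mul_self_nonneg a) hQv.le
        linarith
    have hle : N ⊔ Submodule.span ℝ {v} ≤ W :=
      sup_le hNW ((Submodule.span_singleton_le_iff_mem v W).mpr hvW)
    have : k + 1 ≤ k := Nat.le_findGreatest (hbound _ ⟨_, hle, hsup, hnegsup⟩) ⟨_, hle, hsup, hnegsup⟩
    omega
  -- dimension of P
  have hPdim : 2 * m - k ≤ Module.finrank ℝ P := by
    set ψ : W →ₗ[ℝ] (N →ₗ[ℝ] ℝ) := φ.comp W.subtype with hψ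
    have hrn := LinearMap.finrank_range_add_finrank_ker ψ
    have hrange : Module.finrank ℝ (LinearMap.range ψ) ≤ k := by
      calc Module.finrank ℝ (LinearMap.range ψ) ≤ Module.finrank ℝ (N →ₗ[ℝ] ℝ) :=
            Submodule.finrank_le _
        _ = Module.finrank ℝ N := Subspace.dual_finrank_eq
        _ = k := hNr
    have hkerP : Module.finrank ℝ (LinearMap.ker ψ) = Module.finrank ℝ P := by
      have h1 : LinearMap.ker ψ = Submodule.comap W.subtype (LinearMap.ker φ) :=
        LinearMap.ker_comp _ _
      have h2 : (Submodule.comap W.subtype (LinearMap.ker φ)).map W.subtype = P := by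
        rw [Submodule.map_comap_subtype]
      rw [← h2, Submodule.finrank_map_subtype_eq, h1]
    rw [hWdim, hkerP] at hrn
    omega
  -- J is bijective
  have hJbij : Function.Bijective J := by
    constructor
    · intro a b hab
      have := congrArg J hab
      rw [hJ, hJ] at this
      simpa using this
    · intro v
      exact ⟨-J v, by rw [map_neg, hJ, neg_neg]⟩
  set Je : T ≃ₗ[ℝ] T := LinearEquiv.ofBijective J hJbij with hJe
  have hJPdim : Module.finrank ℝ (P.map J) = Module.finrank ℝ P := by
    have : P.map J = P.map (Je : T →ₗ[ℝ] T) := rfl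
    rw [this, LinearEquiv.finrank_map_eq]
  have hPW : P ≤ W := inf_le_left
  have hJPW : P.map J ≤ W := by
    rintro x ⟨p, hp, rfl⟩
    exact hWJ p (hPW hp)
  have hsupW : Module.finrank ℝ ↥(P ⊔ P.map J) ≤ 2 * m := by
    rw [← hWdim]
    exact Submodule.finrank_mono (sup_le hPW hJPW)
  have hinfpos : 0 < Module.finrank ℝ ↥(P ⊓ P.map J) := by
    have := Submodule.finrank_sup_add_finrank_inf_eq P (P.map J)
    omega
  have hne : P ⊓ P.map J ≠ ⊥ := by
    intro h
    rw [h] at hinfpos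
    simp at hinfpos
  obtain ⟨v, hv, hv0⟩ := Submodule.exists_mem_ne_zero_of_ne_bot hne
  have hvP : v ∈ P := hv.1
  obtain ⟨w, hwP, hwv⟩ := Submodule.mem_map.mp hv.2
  have hQv : 0 ≤ Q v := hPpos v hvP
  have hQJv : 0 ≤ Q (J v) := by
    have : Q (J v) = Q w := by rw [← hwv, hJ, QuadraticMap.map_neg]
    rw [this]
    exact hPpos w hwP
  have := hneg v (hPW hvP) hv0
  linarith
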